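/- arXiv:2303.05563 — 2 statements merged into one kernel-verified Lean document; each statement's English description precedes it below -/
import Mathlib

section
/- Discrete Kallianpur–Streibel formula (two-step case): suppose (X_0, Y_0, X_1, Y_1) has joint law μ(dx_0, dy_0) P(x_0, dx_1) h(x_1, y_0, y_1) dy_1, where h is a jointly measurable nonnegative density in y_1. Then for Lebesgue-almost every (y_0, y_1), the conditional law of X_1 given (Y_0, Y_1) = (y_0, y_1) is given by the normalized measure Π(dx_1) = π(dx_1)/π(E) with π(dx_1) = ∫_{x_0} h(x_1, y_0, y_1) P(x_0, dx_1) μ(dx_0 | Y_0 = y_0), whenever π(E) ∈ (0, ∞). That is, for all bounded measurable f, E[f(X_1) | Y_0, Y_1] = (∫ f dπ)/π(E) almost surely. -/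
open MeasureTheory ProbabilityTheory
open scoped ENNReal

/-!
The unnormalized filter `π` is a kernel from the observations `(y₀, y₁)` to the state space for
which Tonelli turns the given joint density into the disintegration
`law((Y₀, Y₁), X₁) = (law Y₀ ⊗ λ) ⊗ₘ π`. Any such disintegration against a reference measure `ν`
is a Bayes formula: the law of the observations is `ν` with density `q ↦ π q univ`, which is
therefore finite `ν`-a.e., and `π` normalized to mass one is a version of the conditional
distribution of `X₁`, against which `f` integrates to the conditional expectation.
-/

namespace ProbabilityTheory.Kernel

variable {S E : Type*} {mS : MeasurableSpace S} {mE : MeasurableSpace E}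

/-- `π` rescaled to total mass one where `0 < π s univ < ∞`; it vanishes where `π s univ = ∞`
(as `∞⁻¹ = 0`) and where `π s = 0`. -/
noncomputable def normalize (π : Kernel S E) [IsSFiniteKernel π] : Kernel S E :=
  π.withDensity fun s _ => (π s Set.univ)⁻¹

lemma normalize_apply (π : Kernel S E) [IsSFiniteKernel π] (s : S) :
    π.normalize s = (π s Set.univ)⁻¹ • π s := by
  rw [normalize, Kernel.withDensity_apply (f := fun s _ => (π s Set.univ)⁻¹) _
    ((π.measurable_coe .univ).inv.comp measurable_fst), withDensity_const]

instance (π : Kernel S E) [IsSFiniteKernel π] : IsFiniteKernel π.normalize :=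
  ⟨⟨1, ENNReal.one_lt_top, fun s => by
    simp [normalize_apply, ENNReal.inv_mul_le_one]⟩⟩

end ProbabilityTheory.Kernel

namespace MeasureTheory.Measure

variable {S E : Type*} {mS : MeasurableSpace S} {mE : MeasurableSpace E}
  {ν : Measure S} [SFinite ν] {π : Kernel S E} [IsSFiniteKernel π]

lemma fst_compProd_eq_withDensity : (ν ⊗ₘ π).fst = ν.withDensity fun s => π s Set.univ := by
  ext A hA
  rw [fst_apply hA, ← Set.prod_univ, compProd_apply_prod hA .univ, withDensity_apply _ hA]

lemma withDensity_compProd_normalize (hπ : ∀ᵐ s ∂ν, π s Set.univ ≠ ∞) :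
    ν.withDensity (fun s => π s Set.univ) ⊗ₘ π.normalize = ν ⊗ₘ π := by
  ext t ht
  rw [compProd_apply ht, compProd_apply ht, lintegral_withDensity_eq_lintegral_mul _
    (π.measurable_coe .univ) (Kernel.measurable_kernel_prodMk_left ht)]
  refine lintegral_congr_ae ?_
  filter_upwards [hπ] with s hs
  rw [Pi.mul_apply, π.normalize_apply, Measure.smul_apply, smul_eq_mul, ← mul_assoc]
  rcases eq_or_ne (π s Set.univ) 0 with h0 | h0
  · simp [Measure.measure_univ_eq_zero.mp h0]
  · rw [ENNReal.mul_inv_cancel h0 hs, one_mul]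

end MeasureTheory.Measure

section Bayes

open Measure

variable {Ω S E : Type*} {mΩ : MeasurableSpace Ω} {mS : MeasurableSpace S} {mE : MeasurableSpace E}
  {P : Measure Ω} {Z : Ω → S} {X : Ω → E}
  {ν : Measure S} [SFinite ν] {π : Kernel S E} [IsSFiniteKernel π]

lemma map_eq_withDensity_of_map_prodMk_eq_compProd (hX : Measurable X)
    (hπ : P.map (fun ω => (Z ω, X ω)) = ν ⊗ₘ π) :
    P.map Z = ν.withDensity fun s => π s Set.univ := by
  rw [← fst_map_prodMk hX, hπ, fst_compProd_eq_withDensity]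

lemma ae_measure_univ_ne_top_of_map_prodMk_eq_compProd [IsFiniteMeasure P] (hX : Measurable X)
    (hπ : P.map (fun ω => (Z ω, X ω)) = ν ⊗ₘ π) :
    ∀ᵐ s ∂ν, π s Set.univ ≠ ∞ := by
  refine (ae_lt_top (π.measurable_coe .univ) ?_).mono fun _ => LT.lt.ne
  rw [← setLIntegral_univ, ← withDensity_apply _ .univ,
    ← map_eq_withDensity_of_map_prodMk_eq_compProd hX hπ]
  exact measure_ne_top _ _

lemma ae_measure_univ_comp_ne_top_of_map_prodMk_eq_compProd [IsFiniteMeasure P]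
    (hZ : Measurable Z) (hX : Measurable X) (hπ : P.map (fun ω => (Z ω, X ω)) = ν ⊗ₘ π) :
    ∀ᵐ ω ∂P, π (Z ω) Set.univ ≠ ∞ :=
  ae_of_ae_map hZ.aemeasurable <| by
    rw [map_eq_withDensity_of_map_prodMk_eq_compProd hX hπ]
    exact withDensity_absolutelyContinuous _ _
      (ae_measure_univ_ne_top_of_map_prodMk_eq_compProd hX hπ)

theorem condExp_ae_eq_integral_div_of_map_prodMk_eq_compProd [IsFiniteMeasure P]
    [StandardBorelSpace E] [Nonempty E] (hZ : Measurable Z) (hX : Measurable X)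
    (hπ : P.map (fun ω => (Z ω, X ω)) = ν ⊗ₘ π) {f : E → ℝ} (hf : StronglyMeasurable f)
    (hfX : Integrable (fun ω => f (X ω)) P) :
    P[fun ω => f (X ω) | mS.comap Z]
      =ᵐ[P] fun ω => (∫ x, f x ∂π (Z ω)) / (π (Z ω) Set.univ).toReal := by
  have hlaw := map_eq_withDensity_of_map_prodMk_eq_compProd hX hπ
  have hcond : condDistrib X Z P =ᵐ[P.map Z] π.normalize := by
    refine condDistrib_ae_eq_of_measure_eq_compProd Z hX.aemeasurable ?_
    rw [hπ, hlaw, withDensity_compProd_normalize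
      (ae_measure_univ_ne_top_of_map_prodMk_eq_compProd hX hπ)]
  filter_upwards [condExp_ae_eq_integral_condDistrib hZ hX.aemeasurable hf hfX,
    ae_of_ae_map hZ.aemeasurable hcond] with ω hω hω'
  rw [hω, hω', π.normalize_apply, integral_smul_measure, ENNReal.toReal_inv, smul_eq_mul,
    div_eq_inv_mul]

end Bayes

section Filter

variable {E F : Type*} [MeasurableSpace E] [MeasurableSpace F]
  (κ : Kernel E E) [IsSFiniteKernel κ] (ρ : Kernel F E) [IsSFiniteKernel ρ] {h : E → F → F → ℝ}

/-- `π_{(y₀,y₁)}(dx₁) = h(x₁,y₀,y₁) ∫ ρ(y₀, dx₀) κ(x₀, dx₁)`. -/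
noncomputable def unnormalizedFilter (h : E → F → F → ℝ) : Kernel (F × F) E :=
  ((κ ∘ₖ ρ).prodMkRight F).withDensity fun q x => ENNReal.ofReal (h x q.1 q.2)

variable {κ ρ}

lemma lintegral_unnormalizedFilter (hh : Measurable fun p : E × F × F => h p.1 p.2.1 p.2.2)
    (q : F × F) {g : E → ℝ≥0∞} (hg : Measurable g) :
    ∫⁻ x, g x ∂unnormalizedFilter κ ρ h q
      = ∫⁻ x, ENNReal.ofReal (h x q.1 q.2) * g x ∂(κ ∘ₖ ρ) q.1 := by
  rw [unnormalizedFilter, Kernel.lintegral_withDensity _ (by fun_prop) _ hg,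
    Kernel.prodMkRight_apply]

lemma integral_unnormalizedFilter (hh : Measurable fun p : E × F × F => h p.1 p.2.1 p.2.2)
    {q : F × F} (hpos : ∀ x, 0 ≤ h x q.1 q.2) {f : E → ℝ}
    (hf : Integrable f (unnormalizedFilter κ ρ h q)) :
    ∫ x, f x ∂unnormalizedFilter κ ρ h q = ∫ x₀, ∫ x₁, f x₁ * h x₁ q.1 q.2 ∂κ x₀ ∂ρ q.1 := by
  have hd : Measurable fun x => ENNReal.ofReal (h x q.1 q.2) := by fun_prop
  have hfin : ∀ᵐ x ∂(κ ∘ₖ ρ) q.1, ENNReal.ofReal (h x q.1 q.2) < ∞ :=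
    ae_of_all _ fun _ => ENNReal.ofReal_lt_top
  have hsmul (x : E) : (ENNReal.ofReal (h x q.1 q.2)).toReal • f x = f x * h x q.1 q.2 := by
    rw [ENNReal.toReal_ofReal (hpos x), smul_eq_mul, mul_comm]
  rw [unnormalizedFilter, Kernel.withDensity_apply _ (by fun_prop), Kernel.prodMkRight_apply]
    at hf ⊢
  rw [integrable_withDensity_iff_integrable_smul' hd hfin] at hf
  simp_rw [hsmul] at hf
  rw [integral_withDensity_eq_integral_toReal_smul hd hfin]
  simp_rw [hsmul]
  exact Kernel.integral_comp hf

instance : IsSFiniteKernel (unnormalizedFilter κ ρ h) :=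
  Kernel.IsSFiniteKernel.withDensity _ fun _ _ => ENNReal.ofReal_ne_top

lemma map_prodMk_eq_compProd_unnormalizedFilter {Ω : Type*} [MeasurableSpace Ω] {P : Measure Ω}
    [SFinite P] {lam : Measure F} [SFinite lam] {X0 X1 : Ω → E} {Y0 Y1 : Ω → F}
    (hX0 : Measurable X0) (hX1 : Measurable X1) (hY0 : Measurable Y0) (hY1 : Measurable Y1)
    (hh : Measurable fun p : E × F × F => h p.1 p.2.1 p.2.2)
    (hρ : (P.map Y0).compProd ρ = P.map (fun ω => (Y0 ω, X0 ω)))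
    (hjoint : ∀ g : E × F × E × F → ℝ≥0∞, Measurable g →
      ∫⁻ ω, g (X0 ω, Y0 ω, X1 ω, Y1 ω) ∂P
        = ∫⁻ p, (∫⁻ x1, ∫⁻ y1,
            g (p.1, p.2, x1, y1) * ENNReal.ofReal (h x1 p.2 y1) ∂lam ∂(κ p.1))
          ∂(P.map (fun ω => (X0 ω, Y0 ω)))) :
    P.map (fun ω => ((Y0 ω, Y1 ω), X1 ω)) = (P.map Y0).prod lam ⊗ₘ unnormalizedFilter κ ρ h := by
  have hX0Y0 : P.map (fun ω => (X0 ω, Y0 ω)) = ((P.map Y0) ⊗ₘ ρ).map Prod.swap := by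
    rw [hρ, Measure.map_map measurable_swap (by fun_prop)]
    rfl
  refine Measure.ext_of_lintegral _ fun g hg => ?_
  set G : F → E → ℝ≥0∞ := fun y₀ x₁ =>
    ∫⁻ y₁, g ((y₀, y₁), x₁) * ENNReal.ofReal (h x₁ y₀ y₁) ∂lam
  have hG : Measurable (Function.uncurry G) := by fun_prop
  have hκG : Measurable fun p : E × F => ∫⁻ x₁, G p.2 x₁ ∂κ p.1 :=
    show Measurable fun p : E × F => ∫⁻ x₁, G p.2 x₁ ∂κ.prodMkRight F p by fun_prop
  have hπg : Measurable fun q : F × F =>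
      ∫⁻ x₁, ENNReal.ofReal (h x₁ q.1 q.2) * g (q, x₁) ∂(κ ∘ₖ ρ) q.1 :=
    show Measurable fun q : F × F =>
      ∫⁻ x₁, ENNReal.ofReal (h x₁ q.1 q.2) * g (q, x₁) ∂(κ ∘ₖ ρ).prodMkRight F q by fun_prop
  calc ∫⁻ r, g r ∂P.map (fun ω => ((Y0 ω, Y1 ω), X1 ω))
      = ∫⁻ ω, g ((Y0 ω, Y1 ω), X1 ω) ∂P := lintegral_map hg (by fun_prop)
    _ = ∫⁻ p, ∫⁻ x₁, G p.2 x₁ ∂κ p.1 ∂P.map (fun ω => (X0 ω, Y0 ω)) :=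
        hjoint (fun r => g ((r.2.1, r.2.2.2), r.2.2.1)) (by fun_prop)
    _ = ∫⁻ y₀, ∫⁻ x₀, ∫⁻ x₁, G y₀ x₁ ∂κ x₀ ∂ρ y₀ ∂P.map Y0 := by
        rw [hX0Y0, lintegral_map hκG measurable_swap]
        exact Measure.lintegral_compProd (hκG.comp measurable_swap)
    _ = ∫⁻ y₀, ∫⁻ x₁, G y₀ x₁ ∂(κ ∘ₖ ρ) y₀ ∂P.map Y0 := by
        simp_rw [Kernel.lintegral_comp _ _ _ (hG.of_uncurry_left)]
    _ = ∫⁻ y₀, ∫⁻ y₁, ∫⁻ x₁, ENNReal.ofReal (h x₁ y₀ y₁) * g ((y₀, y₁), x₁)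
          ∂(κ ∘ₖ ρ) y₀ ∂lam ∂P.map Y0 := by
        refine lintegral_congr fun y₀ => ?_
        rw [lintegral_lintegral_swap (by fun_prop)]
        simp_rw [mul_comm]
    _ = ∫⁻ q, ∫⁻ x₁, ENNReal.ofReal (h x₁ q.1 q.2) * g (q, x₁) ∂(κ ∘ₖ ρ) q.1
          ∂(P.map Y0).prod lam := (lintegral_prod _ hπg.aemeasurable).symm
    _ = ∫⁻ q, ∫⁻ x, g (q, x) ∂unnormalizedFilter κ ρ h q ∂(P.map Y0).prod lam := by
        refine lintegral_congr fun q => ?_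
        exact (lintegral_unnormalizedFilter hh q (g := fun x => g (q, x)) (by fun_prop)).symm
    _ = ∫⁻ r, g r ∂(P.map Y0).prod lam ⊗ₘ unnormalizedFilter κ ρ h :=
        (Measure.lintegral_compProd hg).symm

end Filter

theorem discrete_kallianpur_streibel_two_step_general
    {Ω : Type*} [MeasureSpace Ω] (Pr : Measure Ω) [IsProbabilityMeasure Pr]
    {E F : Type*} [MeasurableSpace E] [StandardBorelSpace E] [Nonempty E]
    [MeasurableSpace F]
    (lam : Measure F) [SigmaFinite lam]
    (X0 X1 : Ω → E) (Y0 Y1 : Ω → F)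
    (hX0 : Measurable X0) (hX1 : Measurable X1)
    (hY0 : Measurable Y0) (hY1 : Measurable Y1)
    -- the Markov transition kernel of `X`
    (κ : Kernel E E) [IsMarkovKernel κ]
    -- `h` is a jointly measurable nonnegative density in `y₁`
    (h : E → F → F → ℝ)
    (hhmeas : Measurable fun p : E × F × F => h p.1 p.2.1 p.2.2)
    (hhpos : ∀ x1 y0 y1, 0 ≤ h x1 y0 y1)
    -- `ρ` is a regular conditional law of `X₀` given `Y₀`
    (ρ : Kernel F E) [IsMarkovKernel ρ]
    (hρ : (Measure.map Y0 Pr).compProd ρ = Measure.map (fun ω => (Y0 ω, X0 ω)) Pr)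
    -- the joint law of `(X₀, Y₀, X₁, Y₁)` is `μ(dx₀,dy₀) P(x₀,dx₁) h(x₁,y₀,y₁) λ(dy₁)`
    (hjoint : ∀ g : E × F × E × F → ℝ≥0∞,
      Measurable g →
      ∫⁻ ω, g (X0 ω, Y0 ω, X1 ω, Y1 ω) ∂Pr
        = ∫⁻ p, (∫⁻ x1, ∫⁻ y1,
            g (p.1, p.2, x1, y1) * ENNReal.ofReal (h x1 p.2 y1) ∂lam ∂(κ p.1))
          ∂(Measure.map (fun ω => (X0 ω, Y0 ω)) Pr))
    (f : E → ℝ) (hf : Measurable f) (hfbdd : ∃ Cf, ∀ x, |f x| ≤ Cf) :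
    Pr[fun ω => f (X1 ω) |
        MeasurableSpace.comap (fun ω => (Y0 ω, Y1 ω)) inferInstance]
      =ᵐ[Pr] fun ω =>
        (∫ x0, (∫ x1, f x1 * h x1 (Y0 ω) (Y1 ω) ∂(κ x0)) ∂(ρ (Y0 ω)))
          / (∫ x0, (∫ x1, h x1 (Y0 ω) (Y1 ω) ∂(κ x0)) ∂(ρ (Y0 ω))) := by
  obtain ⟨C, hC⟩ := hfbdd
  have hlaw := map_prodMk_eq_compProd_unnormalizedFilter hX0 hX1 hY0 hY1 hhmeas hρ hjoint
  have hfX : Integrable (fun ω => f (X1 ω)) Pr :=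
    .of_bound (hf.comp hX1).aestronglyMeasurable C (ae_of_all _ fun ω => hC (X1 ω))
  filter_upwards [condExp_ae_eq_integral_div_of_map_prodMk_eq_compProd (hY0.prodMk hY1) hX1
      hlaw hf.stronglyMeasurable hfX,
    ae_measure_univ_comp_ne_top_of_map_prodMk_eq_compProd (hY0.prodMk hY1) hX1 hlaw]
    with ω hω hfin
  have : IsFiniteMeasure (unnormalizedFilter κ ρ h (Y0 ω, Y1 ω)) := ⟨hfin.lt_top⟩
  have hpos (x : E) : 0 ≤ h x (Y0 ω, Y1 ω).1 (Y0 ω, Y1 ω).2 := hhpos x _ _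
  have hmass := integral_unnormalizedFilter (κ := κ) (ρ := ρ) hhmeas hpos (integrable_const 1)
  simp only [integral_const, smul_eq_mul, mul_one, one_mul, measureReal_def] at hmass
  rw [hω, ← hmass, integral_unnormalizedFilter hhmeas hpos
    (.of_bound hf.aestronglyMeasurable C (ae_of_all _ hC))]

/-- Discrete Kallianpur–Streibel formula (two-step case): if `(X₀, Y₀, X₁, Y₁)` has joint
law `μ(dx₀,dy₀) P(x₀,dx₁) h(x₁,y₀,y₁) λ(dy₁)`, `ρ` is a conditional law of `X₀` given
`Y₀`, and the normalizing constant is a.s. positive and finite, then the conditional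
expectation of any bounded measurable `f(X₁)` given `(Y₀, Y₁)` is the normalized
unnormalized filter `(∫ f dπ)/π(E)` evaluated at `(Y₀, Y₁)`. -/
theorem discrete_kallianpur_streibel_two_step
    {Ω : Type*} [MeasureSpace Ω] (Pr : Measure Ω) [IsProbabilityMeasure Pr]
    {E F : Type*} [MeasurableSpace E] [StandardBorelSpace E] [Nonempty E]
    [MeasurableSpace F] [StandardBorelSpace F] [Nonempty F]
    (lam : Measure F) [SigmaFinite lam]
    (X0 X1 : Ω → E) (Y0 Y1 : Ω → F)
    (hX0 : Measurable X0) (hX1 : Measurable X1)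
    (hY0 : Measurable Y0) (hY1 : Measurable Y1)
    -- the Markov transition kernel of `X`
    (κ : Kernel E E) [IsMarkovKernel κ]
    -- `h` is a jointly measurable nonnegative density in `y₁`
    (h : E → F → F → ℝ)
    (hhmeas : Measurable fun p : E × F × F => h p.1 p.2.1 p.2.2)
    (hhpos : ∀ x1 y0 y1, 0 ≤ h x1 y0 y1)
    (hhdens : ∀ x1 y0, ∫⁻ y1, ENNReal.ofReal (h x1 y0 y1) ∂lam = 1)
    -- `ρ` is a regular conditional law of `X₀` given `Y₀`
    (ρ : Kernel F E) [IsMarkovKernel ρ]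
    (hρ : (Measure.map Y0 Pr).compProd ρ = Measure.map (fun ω => (Y0 ω, X0 ω)) Pr)
    -- the joint law of `(X₀, Y₀, X₁, Y₁)` is `μ(dx₀,dy₀) P(x₀,dx₁) h(x₁,y₀,y₁) λ(dy₁)`
    (hjoint : ∀ g : E × F × E × F → ℝ≥0∞,
      Measurable g →
      ∫⁻ ω, g (X0 ω, Y0 ω, X1 ω, Y1 ω) ∂Pr
        = ∫⁻ p, (∫⁻ x1, ∫⁻ y1,
            g (p.1, p.2, x1, y1) * ENNReal.ofReal (h x1 p.2 y1) ∂lam ∂(κ p.1))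
          ∂(Measure.map (fun ω => (X0 ω, Y0 ω)) Pr))
    -- the normalizing constant `π(E)` lies in `(0, ∞)` almost surely
    (hden : ∀ᵐ ω ∂Pr,
      0 < (∫⁻ x0, ∫⁻ x1, ENNReal.ofReal (h x1 (Y0 ω) (Y1 ω)) ∂(κ x0) ∂(ρ (Y0 ω)))
      ∧ (∫⁻ x0, ∫⁻ x1, ENNReal.ofReal (h x1 (Y0 ω) (Y1 ω)) ∂(κ x0) ∂(ρ (Y0 ω))) < ⊤)
    (f : E → ℝ) (hf : Measurable f) (hfbdd : ∃ Cf, ∀ x, |f x| ≤ Cf) :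
    Pr[fun ω => f (X1 ω) |
        MeasurableSpace.comap (fun ω => (Y0 ω, Y1 ω)) inferInstance]
      =ᵐ[Pr] fun ω =>
        (∫ x0, (∫ x1, f x1 * h x1 (Y0 ω) (Y1 ω) ∂(κ x0)) ∂(ρ (Y0 ω)))
          / (∫ x0, (∫ x1, h x1 (Y0 ω) (Y1 ω) ∂(κ x0)) ∂(ρ (Y0 ω))) :=
  discrete_kallianpur_streibel_two_step_general Pr lam X0 X1 Y0 Y1 hX0 hX1 hY0 hY1 κ h hhmeas hhpos
    ρ hρ hjoint f hf hfbdd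
end

section
/- Minimization of a convex quadratic functional of a control function: let ν be a probability measure on ℝ^d, let N, Λ be symmetric positive semidefinite d×d matrices, R symmetric positive definite, and let φ : ℝ^d → ℝ^d be square-integrable with respect to ν and w ∈ ℝ^d. Then the functional F(a) = (∫a dν)ᵀ N (∫a dν) + 2 wᵀ (∫ a dν) + 2 ∫ φ(y)ᵀ Λ' a(y) dν(y) + ∫ a(y)ᵀ (Λ + R) a(y) dν(y), defined for a ∈ L²(ν; ℝ^d), is continuous, coercive (F(a) → +∞ as ‖a‖_{L²(ν)} → ∞), strictly convex, and admits a unique global minimizer characterized by the first-order condition N (∫ a dν) + w + (Λ')ᵀ φ(y) + (Λ + R) a(y) = 0 for ν-a.e. y. -/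
/-! For square-integrable `b` and `h`, `F (b + h) = F b + Q h + 2 ∫ G_b ⬝ h dν`, where
`Q h = (∫ h)ᵀ N (∫ h) + ∫ hᵀ (Λ + R) h` and `G_b y = N ∫ b + w + Λ'ᵀ φ y + (Λ + R) b y` is the
left-hand side of the first-order condition. Since `Λ + R ≥ c • 1` with `c > 0`, `Q h ≥ c ‖h‖²`;
this gives coercivity and strict convexity, and shows that `b` minimizes `F` exactly when
`G_b = 0` a.e., uniquely up to a.e. equality. Continuity follows from the same expansion by
Cauchy–Schwarz. A solution of `G_b = 0` is explicit: integrating the equation forces the mean `m`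
of `b` to solve `(N + Λ + R) m = -(w + Λ'ᵀ ∫ φ)`, and then `b = -(Λ + R)⁻¹ (N m + w + Λ'ᵀ φ)`. -/

open MeasureTheory Matrix Filter

/-- The quadratic functional
`F(a) = (∫a dν)ᵀ N (∫a dν) + 2 wᵀ(∫a dν) + 2∫ φᵀ Λ' a dν + ∫ aᵀ(Λ+R)a dν`. -/
noncomputable def quadControlFunctional (d : ℕ) (ν : Measure (Fin d → ℝ))
    (N Λ R Λ' : Matrix (Fin d) (Fin d) ℝ)
    (φ : (Fin d → ℝ) → (Fin d → ℝ)) (w : Fin d → ℝ)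
    (a : (Fin d → ℝ) → (Fin d → ℝ)) : ℝ :=
  (fun i => ∫ y, a y i ∂ν) ⬝ᵥ N.mulVec (fun i => ∫ y, a y i ∂ν)
    + 2 * (w ⬝ᵥ (fun i => ∫ y, a y i ∂ν))
    + 2 * (∫ y, φ y ⬝ᵥ Λ'.mulVec (a y) ∂ν)
    + ∫ y, a y ⬝ᵥ (Λ + R).mulVec (a y) ∂ν

open Topology

section QuadraticForm

variable {ι R : Type*} [Fintype ι] [CommSemiring R]

lemma dotProduct_mulVec_eq_sum (M : Matrix ι ι R) (x y : ι → R) :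
    x ⬝ᵥ M *ᵥ y = ∑ i, ∑ j, M i j * (x i * y j) := by
  simp only [dotProduct, mulVec, Finset.mul_sum]
  exact Finset.sum_congr rfl fun i _ => Finset.sum_congr rfl fun j _ => by ring

lemma Matrix.IsSymm.dotProduct_mulVec_comm {M : Matrix ι ι R} (hM : M.IsSymm) (x y : ι → R) :
    x ⬝ᵥ M *ᵥ y = y ⬝ᵥ M *ᵥ x := by
  rw [dotProduct_mulVec, ← mulVec_transpose, hM.eq, dotProduct_comm]

lemma Matrix.IsSymm.add_dotProduct_mulVec_add {M : Matrix ι ι R} (hM : M.IsSymm) (x y : ι → R) :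
    (x + y) ⬝ᵥ M *ᵥ (x + y) = x ⬝ᵥ M *ᵥ x + 2 * (x ⬝ᵥ M *ᵥ y) + y ⬝ᵥ M *ᵥ y := by
  rw [mulVec_add, add_dotProduct, dotProduct_add, dotProduct_add, hM.dotProduct_mulVec_comm y x]
  ring

lemma Matrix.PosSemidef.dotProduct_mulVec_self_nonneg {M : Matrix ι ι ℝ} (hM : M.PosSemidef)
    (x : ι → ℝ) : 0 ≤ x ⬝ᵥ M *ᵥ x := by
  simpa using hM.dotProduct_mulVec_nonneg x

lemma Matrix.PosDef.dotProduct_mulVec_self_pos {M : Matrix ι ι ℝ} (hM : M.PosDef) {x : ι → ℝ}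
    (hx : x ≠ 0) : 0 < x ⬝ᵥ M *ᵥ x := by
  simpa using hM.dotProduct_mulVec_pos hx

open scoped MatrixOrder in
lemma Matrix.PosDef.exists_pos_mul_dotProduct_self_le [DecidableEq ι] {M : Matrix ι ι ℝ}
    (hM : M.PosDef) : ∃ c > 0, ∀ x : ι → ℝ, c * (x ⬝ᵥ x) ≤ x ⬝ᵥ M *ᵥ x := by
  -- the spectral bound below needs `Nontrivial (Matrix ι ι ℝ)`
  cases isEmpty_or_nonempty ι
  · exact ⟨1, one_pos, fun x => by simp [dotProduct]⟩
  obtain ⟨c, hc, hcM⟩ := (CFC.exists_pos_algebraMap_le_iff hM.isStrictlyPositive.isSelfAdjoint).2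
    fun _ hx => hM.isStrictlyPositive.spectrum_pos hx
  refine ⟨c, hc, fun x => ?_⟩
  have := (Matrix.le_iff.1 hcM).dotProduct_mulVec_self_nonneg x
  rwa [sub_mulVec, dotProduct_sub, Algebra.algebraMap_eq_smul_one, smul_mulVec, one_mulVec,
    dotProduct_smul, smul_eq_mul, sub_nonneg] at this

lemma dotProduct_self_nonneg (x : ι → ℝ) : 0 ≤ x ⬝ᵥ x :=
  Finset.sum_nonneg fun i _ => mul_self_nonneg (x i)

lemma neg_le_two_mul_dotProduct {ε : ℝ} (hε : 0 < ε) (x y : ι → ℝ) :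
    -(ε * (x ⬝ᵥ x) + ε⁻¹ * (y ⬝ᵥ y)) ≤ 2 * (y ⬝ᵥ x) := by
  have hsq : (ε • x + y) ⬝ᵥ (ε • x + y)
      = ε * (ε * (x ⬝ᵥ x) + 2 * (y ⬝ᵥ x) + ε⁻¹ * (y ⬝ᵥ y)) := by
    simp only [add_dotProduct, dotProduct_add, smul_dotProduct, dotProduct_smul, smul_eq_mul,
      dotProduct_comm x y]
    field_simp
    ring
  have := (mul_nonneg_iff_of_pos_left hε).1 (hsq ▸ dotProduct_self_nonneg _)
  linarith

end QuadraticForm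

namespace MeasureTheory

variable {α ι κ : Type*} [Fintype ι] [Fintype κ] [MeasurableSpace α] {μ : Measure α}

lemma MemLp.integrable_dotProduct_mulVec (M : Matrix ι ι ℝ) {a b : α → ι → ℝ}
    (ha : MemLp a 2 μ) (hb : MemLp b 2 μ) : Integrable (fun y => a y ⬝ᵥ M *ᵥ b y) μ := by
  simp only [dotProduct_mulVec_eq_sum]
  exact integrable_finsetSum _ fun i _ => integrable_finsetSum _ fun j _ =>
    ((ha.eval i).integrable_mul (hb.eval j)).const_mul _

lemma MemLp.integrable_dotProduct {a b : α → ι → ℝ} (ha : MemLp a 2 μ) (hb : MemLp b 2 μ) :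
    Integrable (fun y => a y ⬝ᵥ b y) μ := by
  simp only [dotProduct]
  exact integrable_finsetSum _ fun i _ => (ha.eval i).integrable_mul (hb.eval i)

lemma integral_dotProduct_mulVec (M : Matrix ι ι ℝ) {a b : α → ι → ℝ}
    (ha : MemLp a 2 μ) (hb : MemLp b 2 μ) :
    ∫ y, a y ⬝ᵥ M *ᵥ b y ∂μ = ∑ i, ∑ j, M i j * ∫ y, a y i * b y j ∂μ := by
  have hab : ∀ i j, Integrable (fun y => M i j * (a y i * b y j)) μ := fun i j =>
    ((ha.eval i).integrable_mul (hb.eval j)).const_mul _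
  simp only [dotProduct_mulVec_eq_sum]
  rw [integral_finsetSum _ fun i _ => integrable_finsetSum _ fun j _ => hab i j]
  refine Finset.sum_congr rfl fun i _ => ?_
  rw [integral_finsetSum _ fun j _ => hab i j]
  exact Finset.sum_congr rfl fun j _ => integral_const_mul _ _

lemma MemLp.mulVec {p : ENNReal} (A : Matrix κ ι ℝ) {a : α → ι → ℝ} (ha : MemLp a p μ) :
    MemLp (fun y => A *ᵥ a y) p μ :=
  (mulVecLin A).toContinuousLinearMap.comp_memLp' ha

lemma integral_mulVec (A : Matrix κ ι ℝ) {a : α → ι → ℝ} (ha : Integrable a μ) :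
    ∫ y, A *ᵥ a y ∂μ = A *ᵥ ∫ y, a y ∂μ :=
  (mulVecLin A).toContinuousLinearMap.integral_comp_comm ha

lemma integral_const_dotProduct (c : ι → ℝ) {a : α → ι → ℝ} (ha : Integrable a μ) :
    ∫ y, c ⬝ᵥ a y ∂μ = c ⬝ᵥ ∫ y, a y ∂μ :=
  (dotProductBilin ℝ ℝ c).toContinuousLinearMap.integral_comp_comm ha

lemma integral_eq_fun_integral_eval {a : α → ι → ℝ} (ha : Integrable a μ) :
    ∫ y, a y ∂μ = fun i => ∫ y, a y i ∂μ :=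
  funext (eval_integral ha.eval)

lemma sq_integral_mul_le {f g : α → ℝ} (hf : MemLp f 2 μ) (hg : MemLp g 2 μ) :
    (∫ y, f y * g y ∂μ) ^ 2 ≤ (∫ y, f y * f y ∂μ) * ∫ y, g y * g y ∂μ := by
  have inner_toLp : ∀ {u v : α → ℝ} (hu : MemLp u 2 μ) (hv : MemLp v 2 μ),
      inner ℝ (hu.toLp u) (hv.toLp v) = ∫ y, u y * v y ∂μ := fun hu hv => by
    rw [L2.inner_def]
    refine integral_congr_ae ?_
    filter_upwards [hu.coeFn_toLp, hv.coeFn_toLp] with y hu' hv'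
    simp [hu', hv', mul_comm]
  rw [sq, ← inner_toLp hf hg, ← inner_toLp hf hf, ← inner_toLp hg hg]
  exact real_inner_mul_inner_self_le _ _

variable {β : Type*} {l : Filter β}

lemma tendsto_integral_mul_zero {f g : β → α → ℝ} (hf : ∀ n, MemLp (f n) 2 μ)
    (hg : ∀ n, MemLp (g n) 2 μ) {C : ℝ} (hfC : ∀ᶠ n in l, ∫ y, f n y * f n y ∂μ ≤ C)
    (hg0 : Tendsto (fun n => ∫ y, g n y * g n y ∂μ) l (𝓝 0)) :
    Tendsto (fun n => ∫ y, f n y * g n y ∂μ) l (𝓝 0) := by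
  have hsq : Tendsto (fun n => (∫ y, f n y * g n y ∂μ) ^ 2) l (𝓝 0) := by
    refine squeeze_zero' (.of_forall fun n => sq_nonneg _) ?_ (by simpa using hg0.const_mul C)
    filter_upwards [hfC] with n hn
    exact (sq_integral_mul_le (hf n) (hg n)).trans
      (mul_le_mul_of_nonneg_right hn (integral_nonneg fun y => mul_self_nonneg _))
  refine (tendsto_zero_iff_abs_tendsto_zero _).2 ?_
  simpa [Function.comp_def, Real.sqrt_sq_eq_abs] using hsq.sqrt

lemma integral_mul_self_apply_le {a : α → ι → ℝ} (ha : MemLp a 2 μ) (i : ι) :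
    ∫ y, a y i * a y i ∂μ ≤ ∫ y, a y ⬝ᵥ a y ∂μ :=
  integral_mono ((ha.eval i).integrable_mul (ha.eval i)) (ha.integrable_dotProduct ha) fun y =>
    Finset.single_le_sum (f := fun j => a y j * a y j) (fun _ _ => mul_self_nonneg _)
      (Finset.mem_univ i)

lemma tendsto_integral_dotProduct_mulVec_zero (M : Matrix ι ι ℝ) {f g : β → α → ι → ℝ}
    (hf : ∀ n, MemLp (f n) 2 μ) (hg : ∀ n, MemLp (g n) 2 μ) {C : ℝ}
    (hfC : ∀ᶠ n in l, ∫ y, f n y ⬝ᵥ f n y ∂μ ≤ C)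
    (hg0 : Tendsto (fun n => ∫ y, g n y ⬝ᵥ g n y ∂μ) l (𝓝 0)) :
    Tendsto (fun n => ∫ y, f n y ⬝ᵥ M *ᵥ g n y ∂μ) l (𝓝 0) := by
  refine Tendsto.congr (fun n => (integral_dotProduct_mulVec M (hf n) (hg n)).symm) ?_
  have hfi : ∀ i, ∀ᶠ n in l, ∫ y, f n y i * f n y i ∂μ ≤ C := fun i =>
    hfC.mono fun n hn => (integral_mul_self_apply_le (hf n) i).trans hn
  have hgi : ∀ j, Tendsto (fun n => ∫ y, g n y j * g n y j ∂μ) l (𝓝 0) := fun j =>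
    squeeze_zero (fun n => integral_nonneg fun y => mul_self_nonneg _)
      (fun n => integral_mul_self_apply_le (hg n) j) hg0
  simpa using tendsto_finsetSum _ fun i _ => tendsto_finsetSum _ fun j _ =>
    (tendsto_integral_mul_zero (fun n => (hf n).eval i) (fun n => (hg n).eval j) (hfi i)
      (hgi j)).const_mul (M i j)

lemma tendsto_integral_of_tendsto_integral_dotProduct_self [IsFiniteMeasure μ] {h : β → α → ι → ℝ}
    (hh : ∀ n, MemLp (h n) 2 μ) (hh0 : Tendsto (fun n => ∫ y, h n y ⬝ᵥ h n y ∂μ) l (𝓝 0)) :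
    Tendsto (fun n => ∫ y, h n y ∂μ) l (𝓝 0) := by
  refine tendsto_pi_nhds.2 fun i => ?_
  have hi := tendsto_integral_mul_zero (f := fun _ _ => (1 : ℝ)) (fun _ => memLp_const 1)
    (fun n => (hh n).eval i) (.of_forall fun _ => le_rfl)
    (squeeze_zero (fun n => integral_nonneg fun y => mul_self_nonneg _)
      (fun n => integral_mul_self_apply_le (hh n) i) hh0)
  simpa [eval_integral fun j => ((hh _).eval j).integrable one_le_two] using hi

end MeasureTheory

section QuadFunctional

variable {α ι : Type*} [Fintype ι] [MeasurableSpace α] {μ : Measure α}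

noncomputable def quadFunctional (μ : Measure α) (N M : Matrix ι ι ℝ) (g a : α → ι → ℝ) : ℝ :=
  (∫ y, a y ∂μ) ⬝ᵥ N *ᵥ (∫ y, a y ∂μ) + 2 * ∫ y, g y ⬝ᵥ a y ∂μ + ∫ y, a y ⬝ᵥ M *ᵥ a y ∂μ

/-- Half the `L²(μ)`-gradient of `quadFunctional μ N M g` at `a`. -/
noncomputable def quadGradient (μ : Measure α) (N M : Matrix ι ι ℝ) (g a : α → ι → ℝ) (y : α) :
    ι → ℝ :=
  N *ᵥ (∫ y, a y ∂μ) + g y + M *ᵥ a y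

variable {N M : Matrix ι ι ℝ} {g : α → ι → ℝ}

@[simp]
lemma quadFunctional_zero (h : α → ι → ℝ) :
    quadFunctional μ N M 0 h = (∫ y, h y ∂μ) ⬝ᵥ N *ᵥ (∫ y, h y ∂μ) + ∫ y, h y ⬝ᵥ M *ᵥ h y ∂μ := by
  simp [quadFunctional]

lemma quadFunctional_zero_smul (t : ℝ) (h : α → ι → ℝ) :
    quadFunctional μ N M 0 (t • h) = t ^ 2 * quadFunctional μ N M 0 h := by
  simp only [quadFunctional_zero, Pi.smul_apply, integral_smul, mulVec_smul, smul_dotProduct,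
    dotProduct_smul, smul_eq_mul, integral_const_mul]
  ring

lemma quadFunctional_zero_nonneg (hN : N.PosSemidef) (hM : M.PosSemidef) (h : α → ι → ℝ) :
    0 ≤ quadFunctional μ N M 0 h := by
  rw [quadFunctional_zero]
  exact add_nonneg (hN.dotProduct_mulVec_self_nonneg _)
    (integral_nonneg fun y => hM.dotProduct_mulVec_self_nonneg _)

lemma quadFunctional_zero_pos (hN : N.PosSemidef) (hM : M.PosDef) {h : α → ι → ℝ}
    (hh : MemLp h 2 μ) (hh0 : ¬ h =ᵐ[μ] 0) : 0 < quadFunctional μ N M 0 h := by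
  have hint : 0 < ∫ y, h y ⬝ᵥ M *ᵥ h y ∂μ := by
    refine (integral_nonneg fun y => hM.posSemidef.dotProduct_mulVec_self_nonneg _).lt_of_ne
      fun h0 => hh0 ?_
    filter_upwards [(integral_eq_zero_iff_of_nonneg
      (fun y => hM.posSemidef.dotProduct_mulVec_self_nonneg _)
      (hh.integrable_dotProduct_mulVec M hh)).1 h0.symm] with y hy
    by_contra hy0
    exact (hM.dotProduct_mulVec_self_pos hy0).ne' hy
  rw [quadFunctional_zero]
  linarith [hN.dotProduct_mulVec_self_nonneg (∫ y, h y ∂μ)]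

lemma memLp_quadGradient [IsFiniteMeasure μ] (hg : MemLp g 2 μ) {a : α → ι → ℝ}
    (ha : MemLp a 2 μ) : MemLp (quadGradient μ N M g a) 2 μ :=
  ((memLp_const (N *ᵥ ∫ y, a y ∂μ)).add hg).add (ha.mulVec M)

lemma integral_quadGradient_dotProduct_smul (b h : α → ι → ℝ) (t : ℝ) :
    ∫ y, quadGradient μ N M g b y ⬝ᵥ (t • h) y ∂μ
      = t * ∫ y, quadGradient μ N M g b y ⬝ᵥ h y ∂μ := by
  simp only [Pi.smul_apply, dotProduct_smul, smul_eq_mul, integral_const_mul]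

lemma quadFunctional_add [IsFiniteMeasure μ] (hN : N.IsSymm) (hM : M.IsSymm)
    (hg : MemLp g 2 μ) {b h : α → ι → ℝ} (hb : MemLp b 2 μ) (hh : MemLp h 2 μ) :
    quadFunctional μ N M g (b + h) = quadFunctional μ N M g b + quadFunctional μ N M 0 h
      + 2 * ∫ y, quadGradient μ N M g b y ⬝ᵥ h y ∂μ := by
  have hmean : ∫ y, (b + h) y ∂μ = (∫ y, b y ∂μ) + ∫ y, h y ∂μ :=
    integral_add (hb.integrable one_le_two) (hh.integrable one_le_two)
  have hlin : ∫ y, g y ⬝ᵥ (b + h) y ∂μ = (∫ y, g y ⬝ᵥ b y ∂μ) + ∫ y, g y ⬝ᵥ h y ∂μ := by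
    simp only [Pi.add_apply, dotProduct_add]
    exact integral_add (hg.integrable_dotProduct hb) (hg.integrable_dotProduct hh)
  have hquad : ∫ y, (b + h) y ⬝ᵥ M *ᵥ (b + h) y ∂μ = (∫ y, b y ⬝ᵥ M *ᵥ b y ∂μ)
      + 2 * (∫ y, b y ⬝ᵥ M *ᵥ h y ∂μ) + ∫ y, h y ⬝ᵥ M *ᵥ h y ∂μ := by
    simp only [Pi.add_apply, hM.add_dotProduct_mulVec_add]
    rw [integral_add _ (hh.integrable_dotProduct_mulVec M hh),
      integral_add (hb.integrable_dotProduct_mulVec M hb), integral_const_mul]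
    · exact (hb.integrable_dotProduct_mulVec M hh).const_mul 2
    · exact (hb.integrable_dotProduct_mulVec M hb).add
        ((hb.integrable_dotProduct_mulVec M hh).const_mul 2)
  have hgrad : ∫ y, quadGradient μ N M g b y ⬝ᵥ h y ∂μ = (∫ y, b y ∂μ) ⬝ᵥ N *ᵥ (∫ y, h y ∂μ)
      + (∫ y, g y ⬝ᵥ h y ∂μ) + ∫ y, b y ⬝ᵥ M *ᵥ h y ∂μ := by
    simp only [quadGradient, add_dotProduct]
    rw [integral_add _ ((hb.mulVec M).integrable_dotProduct hh),
      integral_add ((memLp_const _).integrable_dotProduct hh) (hg.integrable_dotProduct hh),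
      integral_const_dotProduct _ (hh.integrable one_le_two), dotProduct_comm,
      hN.dotProduct_mulVec_comm]
    · simp only [dotProduct_comm (M *ᵥ _), hM.dotProduct_mulVec_comm (h _)]
    · exact ((memLp_const _).integrable_dotProduct hh).add (hg.integrable_dotProduct hh)
  simp only [quadFunctional, Pi.zero_apply, zero_dotProduct, integral_zero, hmean, hlin, hquad,
    hgrad, hN.add_dotProduct_mulVec_add]
  ring

lemma exists_mul_integral_dotProduct_self_sub_le_quadFunctional [IsFiniteMeasure μ]
    (hN : N.PosSemidef) (hM : M.PosDef) (hg : MemLp g 2 μ) :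
    ∃ c > 0, ∃ K, ∀ a, MemLp a 2 μ → c * ∫ y, a y ⬝ᵥ a y ∂μ - K ≤ quadFunctional μ N M g a := by
  classical
  obtain ⟨c, hc, hcM⟩ := hM.exists_pos_mul_dotProduct_self_le
  refine ⟨c / 2, half_pos hc, (c / 2)⁻¹ * ∫ y, g y ⬝ᵥ g y ∂μ, fun a ha => ?_⟩
  have hpt : ∀ y, c / 2 * (a y ⬝ᵥ a y) - (c / 2)⁻¹ * (g y ⬝ᵥ g y)
      ≤ 2 * (g y ⬝ᵥ a y) + a y ⬝ᵥ M *ᵥ a y := fun y => by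
    linarith [neg_le_two_mul_dotProduct (half_pos hc) (a y) (g y), hcM (a y)]
  have hint : ∫ y, (c / 2 * (a y ⬝ᵥ a y) - (c / 2)⁻¹ * (g y ⬝ᵥ g y)) ∂μ
      ≤ ∫ y, (2 * (g y ⬝ᵥ a y) + a y ⬝ᵥ M *ᵥ a y) ∂μ := integral_mono
    (((ha.integrable_dotProduct ha).const_mul _).sub ((hg.integrable_dotProduct hg).const_mul _))
    (((hg.integrable_dotProduct ha).const_mul 2).add (ha.integrable_dotProduct_mulVec M ha)) hpt
  rw [integral_sub ((ha.integrable_dotProduct ha).const_mul _)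
      ((hg.integrable_dotProduct hg).const_mul _),
    integral_add ((hg.integrable_dotProduct ha).const_mul 2)
      (ha.integrable_dotProduct_mulVec M ha),
    integral_const_mul, integral_const_mul, integral_const_mul] at hint
  rw [quadFunctional]
  linarith [hN.dotProduct_mulVec_self_nonneg (∫ y, a y ∂μ)]

lemma quadFunctional_coercive [IsFiniteMeasure μ] (hN : N.PosSemidef) (hM : M.PosDef)
    (hg : MemLp g 2 μ) (C : ℝ) :
    ∃ ρ, ∀ a, MemLp a 2 μ → ρ ≤ ∫ y, a y ⬝ᵥ a y ∂μ → C ≤ quadFunctional μ N M g a := by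
  obtain ⟨c, hc, K, hK⟩ := exists_mul_integral_dotProduct_self_sub_le_quadFunctional hN hM hg
  refine ⟨(C + K) / c, fun a ha hρ => ?_⟩
  have := (div_le_iff₀' hc).1 hρ
  linarith [hK a ha]

lemma tendsto_quadFunctional_zero [IsFiniteMeasure μ] {β : Type*} {l : Filter β}
    {h : β → α → ι → ℝ} (hh : ∀ n, MemLp (h n) 2 μ)
    (hh0 : Tendsto (fun n => ∫ y, h n y ⬝ᵥ h n y ∂μ) l (𝓝 0)) :
    Tendsto (fun n => quadFunctional μ N M 0 (h n)) l (𝓝 0) := by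
  have hmean : Tendsto (fun n => (∫ y, h n y ∂μ) ⬝ᵥ N *ᵥ ∫ y, h n y ∂μ) l (𝓝 0) := by
    have hcont : Continuous fun x : ι → ℝ => x ⬝ᵥ N *ᵥ x :=
      continuous_id.dotProduct (continuous_const.matrix_mulVec continuous_id)
    simpa [Function.comp_def] using (hcont.tendsto 0).comp
      (tendsto_integral_of_tendsto_integral_dotProduct_self hh hh0)
  have hquad := tendsto_integral_dotProduct_mulVec_zero M hh hh
    (hh0.eventually (ge_mem_nhds one_pos)) hh0
  simpa using hmean.add hquad

lemma tendsto_quadFunctional [IsFiniteMeasure μ] (hN : N.IsSymm) (hM : M.IsSymm)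
    (hg : MemLp g 2 μ) {β : Type*} {l : Filter β} {b : β → α → ι → ℝ} {a : α → ι → ℝ}
    (hb : ∀ n, MemLp (b n) 2 μ) (ha : MemLp a 2 μ)
    (hba : Tendsto (fun n => ∫ y, (b n y - a y) ⬝ᵥ (b n y - a y) ∂μ) l (𝓝 0)) :
    Tendsto (fun n => quadFunctional μ N M g (b n)) l (𝓝 (quadFunctional μ N M g a)) := by
  classical
  have hh : ∀ n, MemLp (b n - a) 2 μ := fun n => (hb n).sub ha
  have hexp : ∀ n, quadFunctional μ N M g (b n) = quadFunctional μ N M g a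
      + quadFunctional μ N M 0 (b n - a) + 2 * ∫ y, quadGradient μ N M g a y ⬝ᵥ (b n - a) y ∂μ :=
    fun n => by rw [← quadFunctional_add hN hM hg ha (hh n), add_sub_cancel]
  have hgrad := tendsto_integral_dotProduct_mulVec_zero 1
    (fun _ => memLp_quadGradient (N := N) (M := M) hg ha) hh (.of_forall fun _ => le_rfl) hba
  simp only [one_mulVec] at hgrad
  simpa [hexp] using ((tendsto_quadFunctional_zero hh hba).const_add
    (quadFunctional μ N M g a)).add (hgrad.const_mul 2)

lemma quadFunctional_strictConvex [IsFiniteMeasure μ] (hN : N.PosSemidef) (hM : M.PosDef)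
    (hg : MemLp g 2 μ) {a b : α → ι → ℝ} (ha : MemLp a 2 μ) (hb : MemLp b 2 μ)
    (hab : ¬ a =ᵐ[μ] b) {t : ℝ} (ht0 : 0 < t) (ht1 : t < 1) :
    quadFunctional μ N M g (t • a + (1 - t) • b)
      < t * quadFunctional μ N M g a + (1 - t) * quadFunctional μ N M g b := by
  have hNs := isHermitian_iff_isSymm.1 hN.1
  have hMs := isHermitian_iff_isSymm.1 hM.1
  have hh : MemLp (a - b) 2 μ := ha.sub hb
  have hQ := quadFunctional_zero_pos (μ := μ) hN hM hh fun h0 => hab ((sub_ae_eq_zero a b).1 h0)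
  have hmid := quadFunctional_add hNs hMs hg hb (hh.const_smul t)
  have hend := quadFunctional_add hNs hMs hg hb hh
  rw [quadFunctional_zero_smul, integral_quadGradient_dotProduct_smul] at hmid
  rw [add_sub_cancel] at hend
  rw [show t • a + (1 - t) • b = b + t • (a - b) by module, hmid, hend]
  nlinarith [mul_pos (mul_pos ht0 (sub_pos.2 ht1)) hQ]

lemma quadFunctional_add_of_quadGradient_eq_zero [IsFiniteMeasure μ] (hN : N.IsSymm)
    (hM : M.IsSymm) (hg : MemLp g 2 μ) {b h : α → ι → ℝ} (hb : MemLp b 2 μ)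
    (hh : MemLp h 2 μ) (hgrad : ∀ᵐ y ∂μ, quadGradient μ N M g b y = 0) :
    quadFunctional μ N M g (b + h) = quadFunctional μ N M g b + quadFunctional μ N M 0 h := by
  rw [quadFunctional_add hN hM hg hb hh,
    integral_eq_zero_of_ae (hgrad.mono fun y hy => by simp [hy]), mul_zero, add_zero]

lemma quadFunctional_le_of_quadGradient_eq_zero [IsFiniteMeasure μ] (hN : N.PosSemidef)
    (hM : M.PosSemidef) (hg : MemLp g 2 μ) {b : α → ι → ℝ} (hb : MemLp b 2 μ)
    (hgrad : ∀ᵐ y ∂μ, quadGradient μ N M g b y = 0) {a : α → ι → ℝ} (ha : MemLp a 2 μ) :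
    quadFunctional μ N M g b ≤ quadFunctional μ N M g a := by
  have hexp := quadFunctional_add_of_quadGradient_eq_zero (isHermitian_iff_isSymm.1 hN.1)
    (isHermitian_iff_isSymm.1 hM.1) hg hb (ha.sub hb) hgrad
  rw [add_sub_cancel] at hexp
  linarith [quadFunctional_zero_nonneg (μ := μ) hN hM (a - b)]

lemma ae_eq_of_quadFunctional_le [IsFiniteMeasure μ] (hN : N.PosSemidef) (hM : M.PosDef)
    (hg : MemLp g 2 μ) {b : α → ι → ℝ} (hb : MemLp b 2 μ)
    (hgrad : ∀ᵐ y ∂μ, quadGradient μ N M g b y = 0) {a : α → ι → ℝ} (ha : MemLp a 2 μ)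
    (hab : quadFunctional μ N M g a ≤ quadFunctional μ N M g b) : a =ᵐ[μ] b := by
  have hexp := quadFunctional_add_of_quadGradient_eq_zero (isHermitian_iff_isSymm.1 hN.1)
    (isHermitian_iff_isSymm.1 hM.1) hg hb (ha.sub hb) hgrad
  rw [add_sub_cancel] at hexp
  by_contra hne
  linarith [quadFunctional_zero_pos hN hM (ha.sub hb) fun h0 => hne ((sub_ae_eq_zero a b).1 h0)]

lemma exists_quadGradient_eq_zero [IsProbabilityMeasure μ] [DecidableEq ι] (hN : N.PosSemidef)
    (hM : M.PosDef) (hg : MemLp g 2 μ) :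
    ∃ a, MemLp a 2 μ ∧ ∀ y, quadGradient μ N M g a y = 0 := by
  have hMdet : IsUnit M.det := isUnit_iff_ne_zero.2 hM.det_pos.ne'
  have hNMdet : IsUnit (N + M).det :=
    isUnit_iff_ne_zero.2 (Matrix.PosDef.posSemidef_add hN hM).det_pos.ne'
  obtain ⟨m, hm⟩ : ∃ m, N *ᵥ m + ∫ y, g y ∂μ = -(M *ᵥ m) := by
    refine ⟨-((N + M)⁻¹ *ᵥ ∫ y, g y ∂μ), ?_⟩
    rw [eq_neg_iff_add_eq_zero, add_right_comm, ← add_mulVec, mulVec_neg,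
      mulVec_mulVec, mul_nonsing_inv _ hNMdet, one_mulVec, neg_add_cancel]
  have hint : Integrable (fun y => N *ᵥ m + g y) μ :=
    (integrable_const _).add (hg.integrable one_le_two)
  have hmean : ∫ y, -(M⁻¹ *ᵥ (N *ᵥ m + g y)) ∂μ = m := by
    rw [integral_neg, integral_mulVec _ hint, integral_add (integrable_const _)
      (hg.integrable one_le_two), integral_const, probReal_univ, one_smul, hm, mulVec_neg,
      neg_neg, mulVec_mulVec, nonsing_inv_mul _ hMdet, one_mulVec]
  have hmem : MemLp (fun y => -(M⁻¹ *ᵥ (N *ᵥ m + g y))) 2 μ :=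
    (((memLp_const (N *ᵥ m)).add hg).mulVec M⁻¹).neg
  refine ⟨_, hmem, fun y => ?_⟩
  rw [quadGradient, hmean, mulVec_neg, mulVec_mulVec, mul_nonsing_inv _ hMdet, one_mulVec]
  abel

lemma quadFunctional_isMin_iff [IsProbabilityMeasure μ] (hN : N.PosSemidef) (hM : M.PosDef)
    (hg : MemLp g 2 μ) {a : α → ι → ℝ} (ha : MemLp a 2 μ) :
    (∀ a', MemLp a' 2 μ → quadFunctional μ N M g a ≤ quadFunctional μ N M g a')
      ↔ ∀ᵐ y ∂μ, quadGradient μ N M g a y = 0 := by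
  classical
  refine ⟨fun hmin => ?_, fun hgrad a' ha' =>
    quadFunctional_le_of_quadGradient_eq_zero hN hM.posSemidef hg ha hgrad ha'⟩
  obtain ⟨b, hb, hgradb⟩ := exists_quadGradient_eq_zero hN hM hg
  have hab := ae_eq_of_quadFunctional_le hN hM hg hb (.of_forall hgradb) ha (hmin b hb)
  filter_upwards [hab] with y hy
  rw [quadGradient, integral_congr_ae hab, hy]
  exact hgradb y

end QuadFunctional

section QuadControl

variable {d : ℕ} {ν : Measure (Fin d → ℝ)} [IsProbabilityMeasure ν]
  {N Λ R Λ' : Matrix (Fin d) (Fin d) ℝ} {φ : (Fin d → ℝ) → Fin d → ℝ} {w : Fin d → ℝ}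

lemma quadControlFunctional_eq_quadFunctional (hφ : MemLp φ 2 ν) {a : (Fin d → ℝ) → Fin d → ℝ}
    (ha : MemLp a 2 ν) :
    quadControlFunctional d ν N Λ R Λ' φ w a
      = quadFunctional ν N (Λ + R) (fun y => w + Λ'ᵀ *ᵥ φ y) a := by
  have hlin : ∫ y, (w + Λ'ᵀ *ᵥ φ y) ⬝ᵥ a y ∂ν
      = w ⬝ᵥ (∫ y, a y ∂ν) + ∫ y, φ y ⬝ᵥ Λ' *ᵥ a y ∂ν := by
    simp only [add_dotProduct, mulVec_transpose, ← dotProduct_mulVec]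
    rw [integral_add ((memLp_const w).integrable_dotProduct ha)
      (hφ.integrable_dotProduct_mulVec Λ' ha),
      integral_const_dotProduct _ (ha.integrable one_le_two)]
  rw [quadControlFunctional, quadFunctional, hlin,
    integral_eq_fun_integral_eval (ha.integrable one_le_two)]
  ring

lemma quadControl_firstOrder_iff {a : (Fin d → ℝ) → Fin d → ℝ} (ha : MemLp a 2 ν) :
    (∀ᵐ y ∂ν, N *ᵥ (fun i => ∫ y', a y' i ∂ν) + w + Λ'ᵀ *ᵥ φ y + (Λ + R) *ᵥ a y = 0)
      ↔ ∀ᵐ y ∂ν, quadGradient ν N (Λ + R) (fun y => w + Λ'ᵀ *ᵥ φ y) a y = 0 := by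
  simp only [quadGradient, integral_eq_fun_integral_eval (ha.integrable one_le_two), add_assoc]

end QuadControl

/-- Minimization of the convex quadratic functional `F` over `L²(ν; ℝ^d)`:
`F` is (sequentially) continuous for the `L²(ν)` topology, coercive, strictly convex,
and admits a unique global minimizer characterized by the first-order condition
`N(∫ a dν) + w + Λ'ᵀ φ(y) + (Λ + R) a(y) = 0` for `ν`-a.e. `y`. -/
theorem quad_functional_minimization
    (d : ℕ) (ν : Measure (Fin d → ℝ)) [IsProbabilityMeasure ν]
    (N Λ R Λ' : Matrix (Fin d) (Fin d) ℝ)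
    (hN : N.PosSemidef) (hΛ : Λ.PosSemidef) (hR : R.PosDef)
    (φ : (Fin d → ℝ) → (Fin d → ℝ)) (hφ : MemLp φ 2 ν)
    (w : Fin d → ℝ) :
    -- sequential continuity in `L²(ν)`
    (∀ (b : ℕ → (Fin d → ℝ) → (Fin d → ℝ)) (a : (Fin d → ℝ) → (Fin d → ℝ)),
      (∀ n, MemLp (b n) 2 ν) → MemLp a 2 ν →
      Tendsto (fun n => ∫ y, (b n y - a y) ⬝ᵥ (b n y - a y) ∂ν) atTop (nhds 0) →
      Tendsto (fun n => quadControlFunctional d ν N Λ R Λ' φ w (b n)) atTop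
        (nhds (quadControlFunctional d ν N Λ R Λ' φ w a)))
    -- coercivity: `F(a) → +∞` as `‖a‖_{L²(ν)} → ∞`
    ∧ (∀ c : ℝ, ∃ ρ : ℝ, ∀ a : (Fin d → ℝ) → (Fin d → ℝ), MemLp a 2 ν →
        ρ ≤ ∫ y, a y ⬝ᵥ a y ∂ν → c ≤ quadControlFunctional d ν N Λ R Λ' φ w a)
    -- strict convexity (up to `ν`-a.e. equality)
    ∧ (∀ a b : (Fin d → ℝ) → (Fin d → ℝ), MemLp a 2 ν → MemLp b 2 ν →
        ¬ (a =ᵐ[ν] b) → ∀ t : ℝ, 0 < t → t < 1 →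
        quadControlFunctional d ν N Λ R Λ' φ w (fun y => t • a y + (1 - t) • b y)
          < t * quadControlFunctional d ν N Λ R Λ' φ w a
            + (1 - t) * quadControlFunctional d ν N Λ R Λ' φ w b)
    -- existence of a global minimizer, characterized by the first-order condition,
    -- unique up to `ν`-a.e. equality
    ∧ (∃ astar : (Fin d → ℝ) → (Fin d → ℝ), MemLp astar 2 ν ∧
        (∀ a, MemLp a 2 ν →
          quadControlFunctional d ν N Λ R Λ' φ w astar
            ≤ quadControlFunctional d ν N Λ R Λ' φ w a) ∧
        (∀ a, MemLp a 2 ν →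
          ((∀ a', MemLp a' 2 ν →
              quadControlFunctional d ν N Λ R Λ' φ w a
                ≤ quadControlFunctional d ν N Λ R Λ' φ w a')
            ↔ (∀ᵐ y ∂ν, N.mulVec (fun i => ∫ y', a y' i ∂ν) + w
                + Λ'.transpose.mulVec (φ y) + (Λ + R).mulVec (a y) = 0))) ∧
        (∀ a, MemLp a 2 ν →
          (∀ a', MemLp a' 2 ν →
            quadControlFunctional d ν N Λ R Λ' φ w a
              ≤ quadControlFunctional d ν N Λ R Λ' φ w a') →
          a =ᵐ[ν] astar)) := by
  have hM : (Λ + R).PosDef := Matrix.PosDef.posSemidef_add hΛ hR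
  have hg : MemLp (fun y => w + Λ'ᵀ *ᵥ φ y) 2 ν := (memLp_const w).add (hφ.mulVec Λ'ᵀ)
  set F := quadControlFunctional d ν N Λ R Λ' φ w
  set J := quadFunctional ν N (Λ + R) fun y => w + Λ'ᵀ *ᵥ φ y
  have hF : ∀ a, MemLp a 2 ν → F a = J a :=
    fun a ha => quadControlFunctional_eq_quadFunctional hφ ha
  have hmin : ∀ a, MemLp a 2 ν →
      ((∀ a', MemLp a' 2 ν → F a ≤ F a') ↔ ∀ a', MemLp a' 2 ν → J a ≤ J a') :=
    fun a ha => forall₂_congr fun a' ha' => by rw [hF a ha, hF a' ha']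
  obtain ⟨astar, hastar, hgrad⟩ := exists_quadGradient_eq_zero hN hM hg
  refine ⟨fun b a hb ha hba => ?_, fun C => ?_, fun a b ha hb hab t ht0 ht1 => ?_,
    astar, hastar, ?_, fun a ha => ?_, fun a ha hamin => ?_⟩
  · rw [hF a ha]
    exact (tendsto_quadFunctional (isHermitian_iff_isSymm.1 hN.1)
      (isHermitian_iff_isSymm.1 hM.1) hg hb ha hba).congr fun n => (hF _ (hb n)).symm
  · obtain ⟨ρ, hρ⟩ := quadFunctional_coercive hN hM hg C
    exact ⟨ρ, fun a ha h => (hF a ha) ▸ hρ a ha h⟩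
  · rw [hF a ha, hF b hb, hF (fun y => t • a y + (1 - t) • b y)
      ((ha.const_smul t).add (hb.const_smul (1 - t)))]
    exact quadFunctional_strictConvex hN hM hg ha hb hab ht0 ht1
  · exact (hmin astar hastar).2 fun a ha =>
      quadFunctional_le_of_quadGradient_eq_zero hN hM.posSemidef hg hastar (.of_forall hgrad) ha
  · rw [hmin a ha, quadFunctional_isMin_iff hN hM hg ha, quadControl_firstOrder_iff ha]
  · exact ae_eq_of_quadFunctional_le hN hM hg hastar (.of_forall hgrad) ha
      ((hmin a ha).1 hamin astar hastar)
end
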